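/- Let E be a totally real number field and F a subfield with [E : F] = 2. Then every nontrivial finite subgroup of the quotient group E*/F* has order 2. -/

import Mathlib

set_option maxHeartbeats 1000000 in
set_option synthInstance.maxHeartbeats 400000 in
/-- Let `E` be a totally real number field and `F` a subfield with `[E : F] = 2`. Then every
nontrivial finite subgroup of `E^*/F^*` has order `2`. -/
theorem stmt_6 (E : Type*) [Field E] [NumberField E]
    (htotallyreal : ∀ τ : E →+* ℂ, ∀ x : E, (τ x).im = 0)
    (F : Subfield E) (hdeg : Module.finrank F E = 2)
    (H : Subgroup (Eˣ ⧸ (Units.map (F.subtype.toMonoidHom)).range))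
    (hH : H ≠ ⊥) (hfin : Finite H) :
    Nat.card H = 2 := by
  classical
  haveI hFD : FiniteDimensional F E := Module.finite_of_finrank_eq_succ hdeg
  -- The only roots of unity in a totally real field are ±1.
  have hroot : ∀ (ζ : E) (n : ℕ), n ≠ 0 → ζ ^ n = 1 → ζ = 1 ∨ ζ = -1 := by
    intro ζ n hn hzn
    obtain ⟨τ⟩ : Nonempty (E →+* ℂ) := inferInstance
    have h1 : (τ ζ) ^ n = 1 := by rw [← map_pow, hzn, map_one]
    have hre : τ ζ = ((τ ζ).re : ℂ) :=
      Complex.ext rfl (by simp [htotallyreal τ ζ])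
    rw [hre] at h1
    have hrn : (τ ζ).re ^ n = 1 := by exact_mod_cast h1
    rcases pow_eq_one_iff_cases.mp hrn with h | h | h
    · exact absurd h hn
    · left; apply τ.injective; rw [hre, h]; simp
    · right; apply τ.injective; rw [hre, h.1]; simp
  -- E/F is normal, hence Galois.
  haveI hnormal : Normal F E := by
    rw [normal_iff]
    intro x
    have hint : IsIntegral F x := IsIntegral.of_finite F x
    refine ⟨hint, ?_⟩
    have hdegp : (minpoly F x).natDegree ≤ 2 := hdeg ▸ minpoly.natDegree_le x
    set p := (minpoly F x).map (algebraMap F E) with hp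
    have hrootp : p.IsRoot x := by
      simp only [p, Polynomial.IsRoot, Polynomial.eval_map, ← Polynomial.aeval_def]; exact
        minpoly.aeval F x
    have hfac : (Polynomial.X - Polynomial.C x) * (p /ₘ (Polynomial.X - Polynomial.C x)) = p :=
      (Polynomial.mul_divByMonic_eq_iff_isRoot).mpr hrootp
    rw [← hfac]
    apply Polynomial.Splits.mul
    · exact Polynomial.Splits.X_sub_C _
    · apply Polynomial.Splits.of_natDegree_le_one
      have h2 : p.natDegree ≤ 2 := by
        simpa [p, Polynomial.natDegree_map] using hdegp
      have h3 := Polynomial.natDegree_divByMonic p (Polynomial.monic_X_sub_C x)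
      rw [Polynomial.natDegree_X_sub_C] at h3
      omega
  haveI : IsGalois F E := ⟨⟩
  have hcard : Fintype.card (E ≃ₐ[F] E) = 2 := by
    rw [← Nat.card_eq_fintype_card, IsGalois.card_aut_eq_finrank, hdeg]
  obtain ⟨σ, hσ⟩ := Fintype.exists_ne_of_one_lt_card (by omega) (1 : E ≃ₐ[F] E)
  obtain ⟨y, hy, huniq⟩ := (Nat.card_eq_two_iff' (1 : E ≃ₐ[F] E)).mp (by rw [Nat.card_eq_fintype_card, hcard])
  have hall : ∀ g : E ≃ₐ[F] E, g = 1 ∨ g = σ := by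
    intro g
    by_cases hg : g = 1
    · exact Or.inl hg
    · right; rw [huniq g hg, huniq σ hσ]
  -- Fixed points of σ are exactly F.
  have hfix : ∀ x : E, σ x = x → x ∈ F := by
    intro x hx
    have hmem : x ∈ IntermediateField.fixedField (⊤ : Subgroup (E ≃ₐ[F] E)) := by
      rintro ⟨g, -⟩
      rcases hall g with rfl | rfl
      · rfl
      · exact hx
    have hbot : IntermediateField.fixedField (⊤ : Subgroup (E ≃ₐ[F] E)) =
        (⊥ : IntermediateField F E) := by
      have h := IsGalois.fixedField_fixingSubgroup (⊥ : IntermediateField F E)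
      rwa [IntermediateField.fixingSubgroup_bot] at h
    rw [hbot, IntermediateField.mem_bot] at hmem
    obtain ⟨a, rfl⟩ := hmem
    exact a.2
  have hσF : ∀ a : E, a ∈ F → σ a = a := by
    intro a ha
    exact σ.commutes ⟨a, ha⟩
  -- Key: x ∉ F with x^n ∈ F implies σ x = -x.
  have hkey : ∀ x : E, x ≠ 0 → x ∉ F → ∀ n : ℕ, n ≠ 0 → x ^ n ∈ F → σ x = -x := by
    intro x hx0 hxF n hn hxn
    have h1 : (σ x) ^ n = x ^ n := by rw [← map_pow]; exact hσF _ hxn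
    have hζ : (σ x / x) ^ n = 1 := by
      rw [div_pow, h1, div_self (pow_ne_zero n hx0)]
    rcases hroot _ n hn hζ with h | h
    · exfalso
      exact hxF (hfix x ((div_eq_one_iff_eq hx0).mp h))
    · have := (div_eq_iff hx0).mp h
      rwa [neg_one_mul] at this
  -- membership in the range subgroup
  have hmemrange : ∀ u : Eˣ,
      u ∈ (Units.map (F.subtype.toMonoidHom)).range ↔ (u : E) ∈ F := by
    intro u
    constructor
    · rintro ⟨v, rfl⟩
      exact (v : F).2
    · intro hu
      have hne : (⟨(u : E), hu⟩ : F) ≠ 0 := by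
        intro h
        exact u.ne_zero (congrArg Subtype.val h)
      exact ⟨Units.mk0 ⟨(u : E), hu⟩ hne, Units.ext rfl⟩
  -- Any two nontrivial elements of H coincide.
  have huniq2 : ∀ x y : Eˣ ⧸ (Units.map (F.subtype.toMonoidHom)).range, x ∈ H → y ∈ H → x ≠ 1 → y ≠ 1 → x = y := by
    have hsig : ∀ x : Eˣ ⧸ (Units.map (F.subtype.toMonoidHom)).range, x ∈ H → x ≠ 1 →
        ∀ u : Eˣ, QuotientGroup.mk u = x → σ (u : E) = -(u : E) := by
      intro x hx hx1 u hu
      have hfo : IsOfFinOrder x :=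
        H.subtype.isOfFinOrder (isOfFinOrder_of_finite (⟨x, hx⟩ : H))
      obtain ⟨n, hn, hxn⟩ := isOfFinOrder_iff_pow_eq_one.mp hfo
      have hun : u ^ n ∈ (Units.map (F.subtype.toMonoidHom)).range := by
        rw [← QuotientGroup.eq_one_iff, QuotientGroup.mk_pow, hu, hxn]
      have hunF : ((u : E)) ^ n ∈ F := by
        have := (hmemrange (u ^ n)).mp hun
        simpa using this
      have huF : (u : E) ∉ F := by
        intro hc
        exact hx1 (hu ▸ (QuotientGroup.eq_one_iff u).mpr ((hmemrange u).mpr hc))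
      exact hkey (u : E) u.ne_zero huF n hn.ne' hunF
    intro x y hx hy hx1 hy1
    obtain ⟨u, rfl⟩ := QuotientGroup.mk_surjective x
    obtain ⟨v, rfl⟩ := QuotientGroup.mk_surjective y
    have hu := hsig _ hx hx1 u rfl
    have hv := hsig _ hy hy1 v rfl
    rw [QuotientGroup.eq]
    apply (hmemrange _).mpr
    have : σ ((u⁻¹ * v : Eˣ) : E) = ((u⁻¹ * v : Eˣ) : E) := by
      push_cast
      rw [map_mul, map_inv₀, hu, hv]
      rw [inv_neg, neg_mul_neg]
    exact hfix _ this
  -- conclude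
  obtain ⟨a, ha1⟩ := Subgroup.ne_bot_iff_exists_ne_one.mp hH
  have hset : (H : Set (Eˣ ⧸ (Units.map (F.subtype.toMonoidHom)).range)) = {1, (a : Eˣ ⧸ (Units.map (F.subtype.toMonoidHom)).range)} := by
    ext x
    simp only [Set.mem_insert_iff, Set.mem_singleton_iff, SetLike.mem_coe]
    constructor
    · intro hx
      by_cases hx1 : x = 1
      · exact Or.inl hx1
      · right
        exact huniq2 x a hx a.2 hx1 (fun h => ha1 (Subtype.ext h))
    · rintro (rfl | rfl)
      · exact H.one_mem
      · exact a.2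
  have : Nat.card H = ((H : Set (Eˣ ⧸ (Units.map (F.subtype.toMonoidHom)).range))).ncard := (Nat.card_coe_set_eq _).symm
  rw [this, hset, Set.ncard_pair]
  exact fun h => ha1 (Subtype.ext h.symm)
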